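/- arXiv:2012.07995 — 7 statements merged into one kernel-verified Lean document; each statement's English description precedes it below -/
import Mathlib

section
/- Two Laurent polynomials F, G ∈ ℤ[X,X⁻¹] represent the same element of ℤ² under the evaluation x ↦ F(T)(b), where T = [[0,-1],[1,2k+1]] and b = (0,1), if and only if F - G is divisible by X² - (2k+1)X + 1 in ℤ[X,X⁻¹]. -/
/-!
`X² - tX + 1` is the characteristic polynomial of `T = !![0, -1; 1, t]`, so it kills `T` by
Cayley–Hamilton and divisible differences represent the same vector. Conversely, modulo
`X² - tX + 1` we have `X² ≡ tX - 1` and `X⁻¹ ≡ t - X`, so every Laurent polynomial is congruent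
to some `a + bX`; and `(a + bT)(0, 1) = (-b, a + bt)` vanishes only for `a = b = 0`.
-/

open LaurentPolynomial

/-- Evaluation of a Laurent polynomial at the invertible matrix Tu, as an
algebra homomorphism ℤ[X,X⁻¹] → M₂(ℤ): X ↦ Tu, X⁻¹ ↦ Tu⁻¹. -/
noncomputable def evalT (Tu : (Matrix (Fin 2) (Fin 2) ℤ)ˣ) :
    LaurentPolynomial ℤ →ₐ[ℤ] Matrix (Fin 2) (Fin 2) ℤ :=
  AddMonoidAlgebra.lift ℤ (Matrix (Fin 2) (Fin 2) ℤ) ℤ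
    ((Units.coeHom (Matrix (Fin 2) (Fin 2) ℤ)).comp (zpowersHom _ Tu))

section Reduction

variable {R : Type*} [CommRing R] (t : R)

lemma exists_dvd_T_sub_linear (n : ℤ) :
    ∃ a b : R, (T 2 - C t * T 1 + 1) ∣ T n - (C a + C b * T 1) := by
  have hT2 : (T 2 : R[T;T⁻¹]) = T 1 * T 1 := by rw [← T_add]; norm_num
  have hT_neg_one : (T (-1) : R[T;T⁻¹]) * T 1 = 1 := by rw [← T_add]; norm_num
  induction n using Int.induction_on with
  | zero => exact ⟨1, 0, by simp⟩
  | succ n ih =>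
    obtain ⟨a, b, q, hq⟩ := ih
    refine ⟨-b, a + t * b, q * T 1 + C b, ?_⟩
    rw [T_add]
    rw [hT2] at hq ⊢
    simp only [map_add, map_mul, map_neg]
    linear_combination T 1 * hq
  | pred n ih =>
    obtain ⟨a, b, q, hq⟩ := ih
    refine ⟨a * t + b, -a, q * T (-1) + C a * T (-1), ?_⟩
    rw [T_sub]
    rw [hT2] at hq ⊢
    simp only [map_add, map_mul, map_neg]
    linear_combination T (-1) * hq + (C b - C a * T 1 + C a * C t) * hT_neg_one

lemma exists_dvd_sub_linear (f : R[T;T⁻¹]) :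
    ∃ a b : R, (T 2 - C t * T 1 + 1) ∣ f - (C a + C b * T 1) := by
  induction f using LaurentPolynomial.induction_on' with
  | add f g hf hg =>
    obtain ⟨a, b, hf⟩ := hf
    obtain ⟨a', b', hg⟩ := hg
    refine ⟨a + a', b + b', ?_⟩
    convert dvd_add hf hg using 1
    simp only [map_add]
    ring
  | C_mul_T n c =>
    obtain ⟨a, b, h⟩ := exists_dvd_T_sub_linear t n
    refine ⟨c * a, c * b, ?_⟩
    convert h.mul_left (C c) using 1
    simp only [map_mul]
    ring

end Reduction

section Evaluation

variable {Tu : (Matrix (Fin 2) (Fin 2) ℤ)ˣ} {t : ℤ}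

lemma evalT_T (n : ℤ) : evalT Tu (T n) = ↑(Tu ^ n) := by
  rw [evalT, T, AddMonoidAlgebra.lift_single]
  simp

lemma evalT_C (a : ℤ) : evalT Tu (C a) = a • 1 := by
  rw [C_eq_algebraMap, AlgHom.commutes, Algebra.algebraMap_eq_smul_one]

lemma evalT_toLaurent (p : Polynomial ℤ) :
    evalT Tu (Polynomial.toLaurent p) = Polynomial.aeval (Tu : Matrix (Fin 2) (Fin 2) ℤ) p := by
  have h : (evalT Tu).comp Polynomial.toLaurentAlg = Polynomial.aeval (Tu : Matrix (Fin 2) (Fin 2) ℤ) :=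
    Polynomial.algHom_ext (by simp [evalT_T])
  exact DFunLike.congr_fun h p

lemma evalT_eq_zero (hTu : (Tu : Matrix (Fin 2) (Fin 2) ℤ) = !![0, -1; 1, t]) :
    evalT Tu (T 2 - C t * T 1 + 1) = 0 := by
  have hchar : Polynomial.toLaurent (Tu : Matrix (Fin 2) (Fin 2) ℤ).charpoly =
      T 2 - C t * T 1 + 1 := by
    rw [Matrix.charpoly_fin_two, hTu]
    simp
  rw [← hchar, evalT_toLaurent, Matrix.aeval_self_charpoly]

lemma evalT_eq_of_dvd_sub (hTu : (Tu : Matrix (Fin 2) (Fin 2) ℤ) = !![0, -1; 1, t])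
    {f g : ℤ[T;T⁻¹]} (h : (T 2 - C t * T 1 + 1) ∣ f - g) : evalT Tu f = evalT Tu g := by
  obtain ⟨q, hq⟩ := h
  rw [← sub_eq_zero, ← map_sub, hq, map_mul, evalT_eq_zero hTu, zero_mul]

lemma evalT_linear_mulVec (hTu : (Tu : Matrix (Fin 2) (Fin 2) ℤ) = !![0, -1; 1, t]) (a b : ℤ) :
    (evalT Tu (C a + C b * T 1)).mulVec ![0, 1] = ![-b, a + b * t] := by
  rw [map_add, map_mul, evalT_C, evalT_C, evalT_T, zpow_one, hTu, smul_mul_assoc, one_mul,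
    Matrix.add_mulVec, Matrix.smul_mulVec, Matrix.smul_mulVec, Matrix.one_mulVec]
  ext i
  fin_cases i <;> simp

lemma evalT_mulVec_eq_zero_iff (hTu : (Tu : Matrix (Fin 2) (Fin 2) ℤ) = !![0, -1; 1, t])
    (f : ℤ[T;T⁻¹]) : (evalT Tu f).mulVec ![0, 1] = 0 ↔ (T 2 - C t * T 1 + 1) ∣ f := by
  constructor
  · intro h
    obtain ⟨a, b, hab⟩ := exists_dvd_sub_linear t f
    rw [evalT_eq_of_dvd_sub hTu hab, evalT_linear_mulVec hTu] at h
    have hb : b = 0 := by simpa using congrFun h 0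
    have ha : a = 0 := by simpa [hb] using congrFun h 1
    simpa [ha, hb] using hab
  · intro h
    rw [evalT_eq_of_dvd_sub hTu (g := 0) (by simpa using h), map_zero, Matrix.zero_mulVec]

end Evaluation

theorem represent_same_iff_divisible_general (k : ℤ)
    (Tu : (Matrix (Fin 2) (Fin 2) ℤ)ˣ)
    (hTu : (Tu : Matrix (Fin 2) (Fin 2) ℤ) = !![0, -1; 1, 2 * k + 1])
    (F G : LaurentPolynomial ℤ) :
    (evalT Tu F).mulVec ![0, 1] = (evalT Tu G).mulVec ![0, 1] ↔
      (T 2 - C (2 * k + 1) * T 1 + 1) ∣ (F - G) := by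
  rw [← sub_eq_zero, ← Matrix.sub_mulVec, ← map_sub, evalT_mulVec_eq_zero_iff hTu]

theorem represent_same_iff_divisible (k : ℤ) (hk : 2 ≤ k)
    (Tu : (Matrix (Fin 2) (Fin 2) ℤ)ˣ)
    (hTu : (Tu : Matrix (Fin 2) (Fin 2) ℤ) = !![0, -1; 1, 2 * k + 1])
    (F G : LaurentPolynomial ℤ) :
    (evalT Tu F).mulVec ![0, 1] = (evalT Tu G).mulVec ![0, 1] ↔
      (T 2 - C (2 * k + 1) * T 1 + 1) ∣ (F - G) :=
  represent_same_iff_divisible_general k Tu hTu F G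
end

section
/- Every element g = (x, tⁿ) of the torus bundle group G = ℤ² ⋊_T ℤ has an n-minimal representative: there exists a Laurent polynomial F ∈ ℤ[X,X⁻¹] with F(T)(b) = x and L_n(F) = ‖g‖_S, where ‖·‖_S is the word length with respect to S = {a,b,t}. -/
/-- Multiplication in G = ℤ² ⋊_T ℤ: (x,m)(y,n) = (x + Tᵐ y, m + n). -/
def tmul (Tu : (Matrix (Fin 2) (Fin 2) ℤ)ˣ) (g h : (Fin 2 → ℤ) × ℤ) : (Fin 2 → ℤ) × ℤ :=
  (g.1 + ((Tu ^ g.2 : (Matrix (Fin 2) (Fin 2) ℤ)ˣ) : Matrix (Fin 2) (Fin 2) ℤ).mulVec h.1,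
    g.2 + h.2)

/-- The generators a, b, t and their inverses. -/
def gens : List ((Fin 2 → ℤ) × ℤ) :=
  [(![1, 0], 0), (![0, 1], 0), ((0 : Fin 2 → ℤ), 1),
   (![-1, 0], 0), (![0, -1], 0), ((0 : Fin 2 → ℤ), -1)]

/-- Word length with respect to S = {a, b, t}. -/
noncomputable def wlen (Tu : (Matrix (Fin 2) (Fin 2) ℤ)ˣ) (g : (Fin 2 → ℤ) × ℤ) : ℕ :=
  sInf {L : ℕ | ∃ l : List ((Fin 2 → ℤ) × ℤ),
    (∀ x ∈ l, x ∈ gens) ∧ l.foldl (tmul Tu) ((0 : Fin 2 → ℤ), 0) = g ∧ l.length = L}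

/-- The element of ℤ² represented by a Laurent polynomial (given by its coefficients):
F(T)(b) = Σ c_j Tʲ(b). -/
noncomputable def repv (Tu : (Matrix (Fin 2) (Fin 2) ℤ)ˣ) (F : ℤ →₀ ℤ) : Fin 2 → ℤ :=
  F.sum fun j c =>
    c • ((Tu ^ j : (Matrix (Fin 2) (Fin 2) ℤ)ˣ) : Matrix (Fin 2) (Fin 2) ℤ).mulVec ![0, 1]

/-- Normalized q. -/
noncomputable def qdeg (n : ℤ) (F : ℤ →₀ ℤ) : ℤ :=
  max (max 0 n) (F.support.max.unbotD 0)

/-- Normalized p. -/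
noncomputable def pdeg (n : ℤ) (F : ℤ →₀ ℤ) : ℤ :=
  max (max 0 (-n)) (-(F.support.min.untopD 0) - 1)

/-- The n-length. -/
noncomputable def Llen (n : ℤ) (F : ℤ →₀ ℤ) : ℤ :=
  2 * pdeg n F + 2 * qdeg n F - |n| + ∑ j ∈ F.support, |F j|

/-!
Since `T a = b`, right multiplication of `(x, tⁿ)` by `a^{±1}`, `b^{±1}`, `t^{±1}` changes a
representative `F` by `±X^{n-1}`, by `±Xⁿ`, or changes `n` by one and keeps `F`. Each of these
moves raises `L_n(F)` by at most one, so following a word of minimal length from the identity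
produces a representative with `L_n(F) ≤ ‖g‖_S`. Conversely, unless `g` is trivial some move
lowers `L_n(F)`: remove a unit from the coefficient of `X^{n-1}` or `Xⁿ` if one of them is
nonzero, and otherwise move `n` towards the far end of the window `[-p-1, q]`. Descending this way
spells a word of length at most `L_n(F)`.
-/

open scoped Matrix

namespace TorusBundle

open Finset

lemma qdeg_le_iff {n c : ℤ} {F : ℤ →₀ ℤ} :
    qdeg n F ≤ c ↔ 0 ≤ c ∧ n ≤ c ∧ ∀ j ∈ F.support, j ≤ c := by
  rcases F.support.eq_empty_or_nonempty with h | h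
  · simp [qdeg, h]
  · rw [qdeg, ← coe_max' h, WithBot.unbotD_coe, max_le_iff, max_le_iff, max'_le_iff, and_assoc]

lemma pdeg_le_iff {n c : ℤ} {F : ℤ →₀ ℤ} :
    pdeg n F ≤ c ↔ 0 ≤ c ∧ -n ≤ c ∧ ∀ j ∈ F.support, -c - 1 ≤ j := by
  rcases F.support.eq_empty_or_nonempty with h | h
  · simp only [pdeg, h, Finset.min_empty, WithTop.untopD_top, Finset.notMem_empty,
      IsEmpty.forall_iff, forall_const, and_true]
    omega
  · have : -F.support.min' h - 1 ≤ c ↔ -c - 1 ≤ F.support.min' h := by omega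
    rw [pdeg, ← coe_min' h, WithTop.untopD_coe, max_le_iff, max_le_iff, this, le_min'_iff,
      and_assoc]

lemma pdeg_nonneg (n : ℤ) (F : ℤ →₀ ℤ) : 0 ≤ pdeg n F := (pdeg_le_iff.1 le_rfl).1

lemma qdeg_nonneg (n : ℤ) (F : ℤ →₀ ℤ) : 0 ≤ qdeg n F := (qdeg_le_iff.1 le_rfl).1

lemma Llen_eq (n : ℤ) (F : ℤ →₀ ℤ) :
    Llen n F = 2 * max (-n) (pdeg 0 F) + 2 * max n (qdeg 0 F) - |n| + ∑ j ∈ F.support, |F j| := by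
  simp only [Llen, pdeg, qdeg]
  omega

lemma Llen_nonneg (n : ℤ) (F : ℤ →₀ ℤ) : 0 ≤ Llen n F := by
  have := pdeg_nonneg 0 F
  have := qdeg_nonneg 0 F
  have : 0 ≤ ∑ j ∈ F.support, |F j| := sum_nonneg fun j _ => abs_nonneg _
  rw [Llen_eq, abs_eq_max_neg]
  omega

lemma Llen_le_add_one {n n' : ℤ} (h : |n' - n| ≤ 1) (F : ℤ →₀ ℤ) : Llen n' F ≤ Llen n F + 1 := by
  have := pdeg_nonneg 0 F
  have := qdeg_nonneg 0 F
  rw [abs_le] at h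
  rw [Llen_eq, Llen_eq, abs_eq_max_neg, abs_eq_max_neg]
  omega

lemma sum_abs_eq_of_support_subset {F : ℤ →₀ ℤ} {s : Finset ℤ} (h : F.support ⊆ s) :
    ∑ j ∈ F.support, |F j| = ∑ j ∈ s, |F j| :=
  sum_subset h fun j _ hj => by rw [Finsupp.notMem_support_iff.1 hj, abs_zero]

lemma support_add_single_subset (F : ℤ →₀ ℤ) (j e : ℤ) :
    (F + Finsupp.single j e).support ⊆ insert j F.support := by
  rw [← coe_subset, coe_insert, Finsupp.support_subset_iff]
  intro i hi
  simp only [Set.mem_insert_iff, mem_coe, Finsupp.mem_support_iff, not_or, not_not] at hi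
  simp [hi.2, Ne.symm hi.1]

lemma support_sub_single_subset {F : ℤ →₀ ℤ} {j : ℤ} (hj : j ∈ F.support) (e : ℤ) :
    (F - Finsupp.single j e).support ⊆ F.support := by
  rw [← coe_subset, Finsupp.support_subset_iff]
  intro i hi
  have hij : j ≠ i := fun h => hi (h ▸ hj)
  simp [Finsupp.notMem_support_iff.1 hi, hij]

lemma sum_abs_add_single_le (F : ℤ →₀ ℤ) (j e : ℤ) :
    ∑ i ∈ (F + Finsupp.single j e).support, |(F + Finsupp.single j e) i|
      ≤ ∑ i ∈ F.support, |F i| + |e| := by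
  set s := insert j F.support
  rw [sum_abs_eq_of_support_subset (support_add_single_subset F j e),
    sum_abs_eq_of_support_subset (subset_insert j F.support)]
  have hsingle : ∑ i ∈ s, |Finsupp.single j e i| = |e| := by
    rw [sum_eq_single_of_mem j (mem_insert_self j _)
      fun i _ hi => by rw [Finsupp.single_eq_of_ne hi, abs_zero], Finsupp.single_eq_same]
  calc ∑ i ∈ s, |(F + Finsupp.single j e) i|
      ≤ ∑ i ∈ s, (|F i| + |Finsupp.single j e i|) := sum_le_sum fun i _ => abs_add_le _ _
    _ = ∑ i ∈ s, |F i| + |e| := by rw [sum_add_distrib, hsingle]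

lemma sum_abs_sub_single_sign {F : ℤ →₀ ℤ} {j : ℤ} (hF : F j ≠ 0) :
    ∑ i ∈ (F - Finsupp.single j (F j).sign).support, |(F - Finsupp.single j (F j).sign) i| + 1
      = ∑ i ∈ F.support, |F i| := by
  have hj : j ∈ F.support := Finsupp.mem_support_iff.2 hF
  rw [sum_abs_eq_of_support_subset (support_sub_single_subset hj _),
    ← add_sum_erase _ _ hj, ← add_sum_erase _ _ hj]
  have hrest : ∑ i ∈ F.support.erase j, |(F - Finsupp.single j (F j).sign) i|
      = ∑ i ∈ F.support.erase j, |F i| :=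
    sum_congr rfl fun i hi => by
      rw [Finsupp.sub_apply, Finsupp.single_eq_of_ne (ne_of_mem_erase hi), sub_zero]
  have hcoeff : |F j - (F j).sign| + 1 = |F j| := by
    rcases hF.lt_or_gt with h | h
    · rw [Int.sign_eq_neg_one_of_neg h, abs_of_neg h, abs_of_nonpos (by omega)]; omega
    · rw [Int.sign_eq_one_of_pos h, abs_of_pos h, abs_of_nonneg (by omega)]; omega
  rw [hrest, Finsupp.sub_apply, Finsupp.single_eq_same]
  omega

lemma Llen_add_single_le {n j : ℤ} (hj₁ : n - 1 ≤ j) (hj₂ : j ≤ n) (F : ℤ →₀ ℤ) (e : ℤ) :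
    Llen n (F + Finsupp.single j e) ≤ Llen n F + |e| := by
  obtain ⟨hP₀, hPn, hPF⟩ := pdeg_le_iff.1 (le_refl (pdeg n F))
  obtain ⟨hQ₀, hQn, hQF⟩ := qdeg_le_iff.1 (le_refl (qdeg n F))
  have hsupp := support_add_single_subset F j e
  have hp : pdeg n (F + Finsupp.single j e) ≤ pdeg n F :=
    pdeg_le_iff.2 ⟨hP₀, hPn, fun i hi => by
      rcases mem_insert.1 (hsupp hi) with rfl | hi
      · omega
      · exact hPF i hi⟩
  have hq : qdeg n (F + Finsupp.single j e) ≤ qdeg n F :=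
    qdeg_le_iff.2 ⟨hQ₀, hQn, fun i hi => by
      rcases mem_insert.1 (hsupp hi) with rfl | hi
      · omega
      · exact hQF i hi⟩
  have := sum_abs_add_single_le F j e
  unfold Llen
  linarith

lemma Llen_sub_single_sign_lt {n j : ℤ} {F : ℤ →₀ ℤ} (hF : F j ≠ 0) :
    Llen n (F - Finsupp.single j (F j).sign) < Llen n F := by
  obtain ⟨hP₀, hPn, hPF⟩ := pdeg_le_iff.1 (le_refl (pdeg n F))
  obtain ⟨hQ₀, hQn, hQF⟩ := qdeg_le_iff.1 (le_refl (qdeg n F))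
  have hsupp := support_sub_single_subset (Finsupp.mem_support_iff.2 hF) (F j).sign
  have hp : pdeg n (F - Finsupp.single j (F j).sign) ≤ pdeg n F :=
    pdeg_le_iff.2 ⟨hP₀, hPn, fun i hi => hPF i (hsupp hi)⟩
  have hq : qdeg n (F - Finsupp.single j (F j).sign) ≤ qdeg n F :=
    qdeg_le_iff.2 ⟨hQ₀, hQn, fun i hi => hQF i (hsupp hi)⟩
  have := sum_abs_sub_single_sign hF
  unfold Llen
  linarith

lemma exists_Llen_lt_of_apply_eq_zero {n : ℤ} {F : ℤ →₀ ℤ} (hn : F n = 0) (hn₁ : F (n - 1) = 0)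
    (h : F ≠ 0 ∨ n ≠ 0) :
    ∃ n', |n' - n| = 1 ∧ Llen n' F < Llen n F := by
  obtain ⟨hP₀, -, hPF⟩ := pdeg_le_iff.1 (le_refl (pdeg 0 F))
  obtain ⟨hQ₀, -, hQF⟩ := qdeg_le_iff.1 (le_refl (qdeg 0 F))
  set P := pdeg 0 F
  set Q := qdeg 0 F
  have hsupp : ∀ j ∈ F.support, j ≠ n ∧ j ≠ n - 1 := fun j hj => by
    constructor <;> rintro rfl <;> exact Finsupp.mem_support_iff.1 hj ‹_›
  have hL : ∀ m, Llen m F = 2 * max (-m) P + 2 * max m Q - max m (-m) + ∑ j ∈ F.support, |F j| :=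
    fun m => by rw [Llen_eq, abs_eq_max_neg]
  rcases le_or_gt 0 n with hn0 | hn0
  · by_cases hQn : n < Q
    · exact ⟨n + 1, by simp, by rw [hL, hL]; omega⟩
    rcases hn0.eq_or_lt with rfl | hn0
    · -- The support avoids `-1` and `0`, so `P = 0` (with `Q = 0`) would force `F = 0`.
      have hP : 0 < P := by
        by_contra hP
        refine h.elim (fun hF => hF ?_) (fun h0 => h0 rfl)
        rw [← Finsupp.support_eq_empty, eq_empty_iff_forall_notMem]
        intro j hj
        have := hPF j hj
        have := hQF j hj
        have := hsupp j hj
        omega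
      exact ⟨-1, by simp, by rw [hL, hL]; omega⟩
    · have hQ : Q ≤ n - 1 := qdeg_le_iff.2 ⟨by omega, by omega, fun j hj => by
        have := hQF j hj
        have := hsupp j hj
        omega⟩
      exact ⟨n - 1, by simp, by rw [hL, hL]; omega⟩
  · by_cases hPn : -n < P
    · exact ⟨n - 1, by simp, by rw [hL, hL]; omega⟩
    · have hP : P ≤ -n - 1 := pdeg_le_iff.2 ⟨by omega, by omega, fun j hj => by
        have := hPF j hj
        have := hsupp j hj
        omega⟩
      exact ⟨n + 1, by simp, by rw [hL, hL]; omega⟩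

section Group

variable {Tu : (Matrix (Fin 2) (Fin 2) ℤ)ˣ}

def evalWord (Tu : (Matrix (Fin 2) (Fin 2) ℤ)ˣ) (l : List ((Fin 2 → ℤ) × ℤ)) :
    (Fin 2 → ℤ) × ℤ :=
  l.foldl (tmul Tu) ((0 : Fin 2 → ℤ), 0)

lemma evalWord_append_singleton (l : List ((Fin 2 → ℤ) × ℤ)) (s : (Fin 2 → ℤ) × ℤ) :
    evalWord Tu (l ++ [s]) = tmul Tu (evalWord Tu l) s := by
  simp [evalWord]

lemma mem_gens_iff {s : (Fin 2 → ℤ) × ℤ} :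
    s ∈ gens ↔ ∃ e : ℤ, |e| = 1 ∧ (s = (![e, 0], 0) ∨ s = (![0, e], 0) ∨ s = (0, e)) := by
  constructor
  · simp only [gens, List.mem_cons, List.not_mem_nil, or_false]
    rintro (rfl | rfl | rfl | rfl | rfl | rfl)
    exacts [⟨1, by simp, by simp⟩, ⟨1, by simp, by simp⟩, ⟨1, by simp, by simp⟩,
      ⟨-1, by simp, by simp⟩, ⟨-1, by simp, by simp⟩, ⟨-1, by simp, by simp⟩]
  · rintro ⟨e, he, hs⟩
    rcases abs_eq zero_le_one |>.1 he with rfl | rfl <;>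
      rcases hs with rfl | rfl | rfl <;> simp [gens]

lemma repv_add_single (F : ℤ →₀ ℤ) (j e : ℤ) :
    repv Tu (F + Finsupp.single j e)
      = repv Tu F + e • (↑(Tu ^ j) : Matrix (Fin 2) (Fin 2) ℤ) *ᵥ ![0, 1] := by
  rw [repv, repv, Finsupp.sum_add_index' (by simp) fun _ _ _ => add_smul _ _ _,
    Finsupp.sum_single_index (by simp)]

lemma tmul_b_pow (F : ℤ →₀ ℤ) (n e : ℤ) :
    tmul Tu (repv Tu F, n) (![0, e], 0) = (repv Tu (F + Finsupp.single n e), n) := by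
  have : (![0, e] : Fin 2 → ℤ) = e • ![0, 1] := by simp
  rw [tmul, repv_add_single, this, Matrix.mulVec_smul, add_zero]

lemma zpow_neg_one_mulVec_b (hT : (Tu : Matrix (Fin 2) (Fin 2) ℤ) *ᵥ ![1, 0] = ![0, 1]) :
    (↑(Tu ^ (-1 : ℤ)) : Matrix (Fin 2) (Fin 2) ℤ) *ᵥ ![0, 1] = ![1, 0] := by
  rw [← hT, Matrix.mulVec_mulVec, ← Units.val_mul, zpow_neg_one, inv_mul_cancel, Units.val_one,
    Matrix.one_mulVec]

lemma tmul_a_pow (hT : (Tu : Matrix (Fin 2) (Fin 2) ℤ) *ᵥ ![1, 0] = ![0, 1])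
    (F : ℤ →₀ ℤ) (n e : ℤ) :
    tmul Tu (repv Tu F, n) (![e, 0], 0) = (repv Tu (F + Finsupp.single (n - 1) e), n) := by
  have : (![e, 0] : Fin 2 → ℤ) = e • ![1, 0] := by simp
  rw [tmul, repv_add_single, this, ← zpow_neg_one_mulVec_b hT, Matrix.mulVec_smul,
    Matrix.mulVec_mulVec, ← Units.val_mul, ← zpow_add, add_zero, ← sub_eq_add_neg]

lemma tmul_t_pow (x : Fin 2 → ℤ) (n e : ℤ) : tmul Tu (x, n) (0, e) = (x, n + e) := by
  simp [tmul]

lemma repv_surjective (hT : (Tu : Matrix (Fin 2) (Fin 2) ℤ) *ᵥ ![1, 0] = ![0, 1]) :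
    Function.Surjective (repv Tu) := by
  intro x
  refine ⟨0 + Finsupp.single (-1) (x 0) + Finsupp.single 0 (x 1), ?_⟩
  rw [repv_add_single, repv_add_single, zpow_neg_one_mulVec_b hT, zpow_zero, Units.val_one,
    Matrix.one_mulVec]
  ext i
  fin_cases i <;> simp [repv]

lemma exists_Llen_tmul_le (hT : (Tu : Matrix (Fin 2) (Fin 2) ℤ) *ᵥ ![1, 0] = ![0, 1])
    {s : (Fin 2 → ℤ) × ℤ} (hs : s ∈ gens) (F : ℤ →₀ ℤ) (n : ℤ) :
    ∃ F', (repv Tu F', n + s.2) = tmul Tu (repv Tu F, n) s ∧ Llen (n + s.2) F' ≤ Llen n F + 1 := by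
  obtain ⟨e, he, rfl | rfl | rfl⟩ := mem_gens_iff.1 hs
  · refine ⟨F + Finsupp.single (n - 1) e, by rw [tmul_a_pow hT, add_zero], ?_⟩
    simpa [he] using Llen_add_single_le (by omega) (by omega) F e
  · refine ⟨F + Finsupp.single n e, by rw [tmul_b_pow, add_zero], ?_⟩
    simpa [he] using Llen_add_single_le (by omega) le_rfl F e
  · exact ⟨F, (tmul_t_pow _ n e).symm, Llen_le_add_one (by simp [he]) F⟩

lemma exists_tmul_eq_Llen_lt (hT : (Tu : Matrix (Fin 2) (Fin 2) ℤ) *ᵥ ![1, 0] = ![0, 1])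
    {F : ℤ →₀ ℤ} {n : ℤ} (h : F ≠ 0 ∨ n ≠ 0) :
    ∃ F' n', ∃ s ∈ gens, tmul Tu (repv Tu F', n') s = (repv Tu F, n) ∧ Llen n' F' < Llen n F := by
  by_cases hb : F n ≠ 0
  · refine ⟨F - Finsupp.single n (F n).sign, n, (![0, (F n).sign], 0),
      mem_gens_iff.2 ⟨_, Int.abs_sign_of_ne_zero hb, Or.inr (Or.inl rfl)⟩, ?_,
      Llen_sub_single_sign_lt hb⟩
    rw [tmul_b_pow, sub_add_cancel]
  by_cases ha : F (n - 1) ≠ 0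
  · refine ⟨F - Finsupp.single (n - 1) (F (n - 1)).sign, n, (![(F (n - 1)).sign, 0], 0),
      mem_gens_iff.2 ⟨_, Int.abs_sign_of_ne_zero ha, Or.inl rfl⟩, ?_,
      Llen_sub_single_sign_lt ha⟩
    rw [tmul_a_pow hT, sub_add_cancel]
  push Not at hb ha
  obtain ⟨n', hn', hlt⟩ := exists_Llen_lt_of_apply_eq_zero hb ha h
  refine ⟨F, n', (0, n - n'),
    mem_gens_iff.2 ⟨n - n', by rwa [abs_sub_comm], Or.inr (Or.inr rfl)⟩,
    by rw [tmul_t_pow, add_sub_cancel], hlt⟩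

lemma exists_repv_eq_Llen_le_length (hT : (Tu : Matrix (Fin 2) (Fin 2) ℤ) *ᵥ ![1, 0] = ![0, 1])
    (l : List ((Fin 2 → ℤ) × ℤ)) (hl : ∀ s ∈ l, s ∈ gens) :
    ∃ F, repv Tu F = (evalWord Tu l).1 ∧ Llen (evalWord Tu l).2 F ≤ l.length := by
  induction l using List.reverseRecOn with
  | nil => exact ⟨0, by simp [repv, evalWord], by simp [Llen, pdeg, qdeg, evalWord]⟩
  | append_singleton l s ih =>
    obtain ⟨F, hF, hlen⟩ := ih fun t ht => hl t (List.mem_append_left _ ht)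
    obtain ⟨F', hF', hlen'⟩ :=
      exists_Llen_tmul_le hT (hl s (List.mem_append_right _ (List.mem_singleton_self s))) F
        (evalWord Tu l).2
    have hg : evalWord Tu l = (repv Tu F, (evalWord Tu l).2) := Prod.ext hF.symm rfl
    rw [evalWord_append_singleton, hg, ← hF']
    refine ⟨F', rfl, ?_⟩
    push_cast [List.length_append, List.length_singleton]
    linarith

lemma exists_word_length_le_Llen (hT : (Tu : Matrix (Fin 2) (Fin 2) ℤ) *ᵥ ![1, 0] = ![0, 1])
    (F : ℤ →₀ ℤ) (n : ℤ) :
    ∃ l, (∀ s ∈ l, s ∈ gens) ∧ evalWord Tu l = (repv Tu F, n) ∧ (l.length : ℤ) ≤ Llen n F := by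
  induction hN : (Llen n F).toNat using Nat.strong_induction_on generalizing F n with
  | _ N ih =>
    by_cases h : F = 0 ∧ n = 0
    · obtain ⟨rfl, rfl⟩ := h
      exact ⟨[], by simp, by simp [evalWord, repv], by simpa using Llen_nonneg 0 0⟩
    obtain ⟨F', n', s, hs, hmul, hlt⟩ := exists_tmul_eq_Llen_lt hT (not_and_or.1 h)
    obtain ⟨l, hl, hE, hlen⟩ := ih _ (by have := Llen_nonneg n' F'; omega) F' n' rfl
    refine ⟨l ++ [s], ?_, by rw [evalWord_append_singleton, hE, hmul], ?_⟩
    · exact fun t ht => (List.mem_append.1 ht).elim (hl t) fun h => List.mem_singleton.1 h ▸ hs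
    · push_cast [List.length_append, List.length_singleton]
      linarith

lemma wlen_le_length {l : List ((Fin 2 → ℤ) × ℤ)} {g : (Fin 2 → ℤ) × ℤ}
    (hl : ∀ s ∈ l, s ∈ gens) (hE : evalWord Tu l = g) : wlen Tu g ≤ l.length :=
  Nat.sInf_le ⟨l, hl, hE, rfl⟩

lemma exists_word_length_eq_wlen (hT : (Tu : Matrix (Fin 2) (Fin 2) ℤ) *ᵥ ![1, 0] = ![0, 1])
    (g : (Fin 2 → ℤ) × ℤ) :
    ∃ l, (∀ s ∈ l, s ∈ gens) ∧ evalWord Tu l = g ∧ l.length = wlen Tu g := by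
  obtain ⟨F, hF⟩ := repv_surjective hT g.1
  obtain ⟨l, hl, hE, -⟩ := exists_word_length_le_Llen hT F g.2
  rw [hF] at hE
  exact Nat.sInf_mem (s := {L | ∃ l, (∀ s ∈ l, s ∈ gens) ∧ evalWord Tu l = g ∧ l.length = L})
    ⟨l.length, l, hl, hE, rfl⟩

end Group

end TorusBundle

open TorusBundle in
theorem exists_n_minimal_representative_general (k : ℤ)
    (Tu : (Matrix (Fin 2) (Fin 2) ℤ)ˣ)
    (hTu : (Tu : Matrix (Fin 2) (Fin 2) ℤ) = !![0, -1; 1, 2 * k + 1])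
    (x : Fin 2 → ℤ) (n : ℤ) :
    ∃ F : ℤ →₀ ℤ, repv Tu F = x ∧ Llen n F = (wlen Tu (x, n) : ℤ) := by
  have hT : (Tu : Matrix (Fin 2) (Fin 2) ℤ) *ᵥ ![1, 0] = ![0, 1] := by
    rw [hTu]
    ext i
    fin_cases i <;> simp
  obtain ⟨l, hl, hE, hlen⟩ := exists_word_length_eq_wlen hT (x, n)
  obtain ⟨F, hF, hFl⟩ : ∃ F, repv Tu F = x ∧ Llen n F ≤ l.length :=
    by simpa [hE] using exists_repv_eq_Llen_le_length hT l hl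
  obtain ⟨l', hl', hE', hlen'⟩ := exists_word_length_le_Llen hT F n
  rw [hF] at hE'
  exact ⟨F, hF, le_antisymm (hlen ▸ hFl) ((Nat.cast_le.2 (wlen_le_length hl' hE')).trans hlen')⟩

theorem exists_n_minimal_representative (k : ℤ) (hk : 2 ≤ k)
    (Tu : (Matrix (Fin 2) (Fin 2) ℤ)ˣ)
    (hTu : (Tu : Matrix (Fin 2) (Fin 2) ℤ) = !![0, -1; 1, 2 * k + 1])
    (x : Fin 2 → ℤ) (n : ℤ) :
    ∃ F : ℤ →₀ ℤ, repv Tu F = x ∧ Llen n F = (wlen Tu (x, n) : ℤ) :=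
  exists_n_minimal_representative_general k Tu hTu x n
end

section
/- For g = (x, tⁿ) ∈ G with n ≥ 0, the word length ‖g‖ with respect to {a,b,t} equals the minimum over all integers p ≥ 0, q ≥ n and all integer coefficients c_{-p-1},...,c_q with x = Σ_{j=-p-1}^q c_j Tʲ(b) of the quantity 2p + 2q - n + Σ_{j=-p-1}^q |c_j|. -/
open Finset Matrix

theorem natCast_sInf_eq_sInf_of_coinitial {W : Set ℕ} {S : Set ℤ} (hW : W.Nonempty)
    (hWS : ∀ m ∈ S, ∃ L ∈ W, (L : ℤ) ≤ m) (hSW : ∀ L ∈ W, ∃ m ∈ S, m ≤ L) :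
    ((sInf W : ℕ) : ℤ) = sInf S := by
  obtain ⟨m, hmS, hm⟩ := hSW _ (Nat.sInf_mem hW)
  have hS : BddBelow S := ⟨0, fun m' hm' => by
    obtain ⟨L, -, hL⟩ := hWS m' hm'
    exact (Nat.cast_nonneg L).trans hL⟩
  refine le_antisymm (le_csInf ⟨m, hmS⟩ fun m' hm' => ?_) ((csInf_le hS hmS).trans hm)
  obtain ⟨L, hL, hLm⟩ := hWS m' hm'
  exact (Nat.cast_le.2 (Nat.sInf_le hL)).trans hLm

theorem Int.Icc_add_succ_eq_insert (j : ℤ) (k : ℕ) :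
    Icc j (j + (k + 1 : ℕ)) = insert j (Icc (j + 1) (j + 1 + k)) := by
  ext i
  simp only [mem_Icc, mem_insert]
  omega

theorem Finsupp.sum_abs_add_le {α M : Type*} [AddCommGroup M] [LinearOrder M]
    [IsOrderedAddMonoid M] (c d : α →₀ M) :
    ((c + d).sum fun _ a => |a|) ≤ (c.sum fun _ a => |a|) + d.sum fun _ a => |a| := by
  classical
  have hc := c.sum_of_support_subset (subset_union_left (s₂ := d.support)) (fun _ a => |a|)
    (fun _ _ => abs_zero)
  have hd := d.sum_of_support_subset (subset_union_right (s₁ := c.support)) (fun _ a => |a|)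
    (fun _ _ => abs_zero)
  rw [(c + d).sum_of_support_subset Finsupp.support_add (fun _ a => |a|) (fun _ _ => abs_zero),
    hc, hd, ← sum_add_distrib]
  exact Finset.sum_le_sum fun j _ => by rw [Finsupp.add_apply]; exact abs_add_le _ _

namespace SemidirectZ2

abbrev Mat := Matrix (Fin 2) (Fin 2) ℤ
abbrev Elt := (Fin 2 → ℤ) × ℤ

def aGen : Elt := (![1, 0], 0)
def bGen : Elt := (![0, 1], 0)
def tGen : Elt := (0, 1)

theorem mem_gens_iff {s : Elt} :
    s ∈ gens ↔ ∃ ε : ℤ, |ε| = 1 ∧ (s = ε • aGen ∨ s = ε • bGen ∨ s = ε • tGen) := by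
  constructor
  · intro hs
    simp only [gens, List.mem_cons, List.not_mem_nil, or_false] at hs
    rcases hs with rfl | rfl | rfl | rfl | rfl | rfl
    exacts [⟨1, abs_one, by decide⟩, ⟨1, abs_one, by decide⟩, ⟨1, abs_one, by decide⟩,
      ⟨-1, by norm_num, by decide⟩, ⟨-1, by norm_num, by decide⟩, ⟨-1, by norm_num, by decide⟩]
  · rintro ⟨ε, hε, hs⟩
    rcases (abs_eq zero_le_one).1 hε with rfl | rfl <;> rcases hs with rfl | rfl | rfl <;> decide

/-- For `s ∈ {a, b, t}` the pair `-s` encodes `s⁻¹`, so this is a word for `sᵏ`. -/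
def genPow (s : Elt) (k : ℤ) : List Elt := List.replicate k.natAbs (k.sign • s)

theorem length_genPow (s : Elt) (k : ℤ) : (genPow s k).length = k.natAbs :=
  List.length_replicate

theorem mem_gens_of_mem_genPow {s : Elt} (hs : s = aGen ∨ s = bGen ∨ s = tGen) {k : ℤ} {y : Elt}
    (hy : y ∈ genPow s k) : y ∈ gens := by
  obtain ⟨hk, rfl⟩ := List.mem_replicate.1 hy
  exact mem_gens_iff.2 ⟨k.sign, Int.abs_sign_of_ne_zero (Int.natAbs_ne_zero.1 hk),
    by rcases hs with rfl | rfl | rfl <;> simp⟩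

variable (Tu : Matˣ)

theorem foldl_tmul_replicate {e : Elt} (he : e.1 = 0 ∨ e.2 = 0) (g : Elt) (n : ℕ) :
    (List.replicate n e).foldl (tmul Tu) g = tmul Tu g (n • e) := by
  induction n with
  | zero => simp [tmul]
  | succ n ih =>
    rw [List.replicate_succ', List.foldl_concat, ih]
    obtain ⟨x, m⟩ := g
    obtain ⟨v, s⟩ := e
    rcases he with rfl | rfl <;> simp [tmul, add_smul, add_assoc, Matrix.mulVec_add]

theorem foldl_tmul_genPow {s : Elt} (hs : s.1 = 0 ∨ s.2 = 0) (g : Elt) (k : ℤ) :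
    (genPow s k).foldl (tmul Tu) g = tmul Tu g (k • s) := by
  rw [genPow, foldl_tmul_replicate Tu (by rcases hs with h | h <;> simp [h]), ← natCast_zsmul,
    smul_smul, mul_comm, Int.sign_mul_natAbs]

theorem exists_word_foldl_eq (g : Elt) : ∃ l : List Elt, (∀ s ∈ l, s ∈ gens) ∧
    l.foldl (tmul Tu) ((0 : Fin 2 → ℤ), 0) = g := by
  obtain ⟨x, n⟩ := g
  refine ⟨genPow aGen (x 0) ++ genPow bGen (x 1) ++ genPow tGen n, ?_, ?_⟩
  · simp only [List.mem_append]
    rintro s ((hs | hs) | hs)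
    exacts [mem_gens_of_mem_genPow (.inl rfl) hs, mem_gens_of_mem_genPow (.inr (.inl rfl)) hs,
      mem_gens_of_mem_genPow (.inr (.inr rfl)) hs]
  · rw [List.foldl_append, List.foldl_append, foldl_tmul_genPow Tu (.inl rfl),
      foldl_tmul_genPow Tu (.inr rfl), foldl_tmul_genPow Tu (.inr rfl)]
    simp only [tmul, aGen, bGen, tGen, Prod.smul_mk, smul_zero, smul_eq_mul, mul_zero, mul_one,
      add_zero, zero_add, zpow_zero, Units.val_one, one_mulVec, mulVec_zero, Prod.mk.injEq,
      and_true]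
    ext i
    fin_cases i <;> simp

def orbitB (j : ℤ) : Fin 2 → ℤ := ((Tu ^ j : Matˣ) : Mat) *ᵥ ![0, 1]

theorem zpow_mulVec_e1 {d : ℤ} (hTu : (Tu : Mat) = !![0, -1; 1, d]) (m : ℤ) :
    ((Tu ^ m : Matˣ) : Mat) *ᵥ ![1, 0] = orbitB Tu (m - 1) := by
  have hT : (Tu : Mat) *ᵥ ![1, 0] = ![0, 1] := by
    rw [hTu]; ext i; fin_cases i <;> simp [Matrix.mulVec, dotProduct]
  rw [orbitB, ← hT, Matrix.mulVec_mulVec, ← Units.val_mul, ← _root_.zpow_add_one, sub_add_cancel]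

theorem tmul_smul_aGen {d : ℤ} (hTu : (Tu : Mat) = !![0, -1; 1, d]) (x : Fin 2 → ℤ) (m ε : ℤ) :
    tmul Tu (x, m) (ε • aGen) = (x + ε • orbitB Tu (m - 1), m) := by
  simp only [tmul, aGen, Prod.smul_mk, smul_zero, add_zero, mulVec_smul, zpow_mulVec_e1 Tu hTu]

theorem tmul_smul_bGen (x : Fin 2 → ℤ) (m ε : ℤ) :
    tmul Tu (x, m) (ε • bGen) = (x + ε • orbitB Tu m, m) := by
  simp only [tmul, bGen, orbitB, Prod.smul_mk, smul_zero, add_zero, mulVec_smul]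

theorem tmul_smul_tGen (x : Fin 2 → ℤ) (m ε : ℤ) :
    tmul Tu (x, m) (ε • tGen) = (x, m + ε) := by
  simp only [tmul, tGen, Prod.smul_mk, smul_zero, mulVec_zero, add_zero, smul_eq_mul, mul_one]

def ladder (c : ℤ → ℤ) (j : ℤ) : ℕ → List Elt
  | 0 => genPow bGen (c j)
  | k + 1 => genPow bGen (c j) ++ tGen :: ladder c (j + 1) k

theorem mem_gens_of_mem_ladder (c : ℤ → ℤ) (j : ℤ) (k : ℕ) {s : Elt} (hs : s ∈ ladder c j k) :
    s ∈ gens := by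
  induction k generalizing j with
  | zero => exact mem_gens_of_mem_genPow (.inr (.inl rfl)) hs
  | succ k ih =>
    simp only [ladder, List.mem_append, List.mem_cons] at hs
    rcases hs with hs | rfl | hs
    exacts [mem_gens_of_mem_genPow (.inr (.inl rfl)) hs, by decide, ih _ hs]

theorem length_ladder (c : ℤ → ℤ) (j : ℤ) (k : ℕ) :
    ((ladder c j k).length : ℤ) = k + ∑ i ∈ Icc j (j + k), |c i| := by
  induction k generalizing j with
  | zero => simp [ladder, length_genPow]
  | succ k ih =>
    rw [ladder, List.length_append, List.length_cons, Int.Icc_add_succ_eq_insert,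
      sum_insert (by simp), length_genPow]
    push_cast
    rw [ih]
    ring

theorem foldl_tmul_ladder (c : ℤ → ℤ) (x : Fin 2 → ℤ) (j : ℤ) (k : ℕ) :
    (ladder c j k).foldl (tmul Tu) (x, j) =
      (x + ∑ i ∈ Icc j (j + k), c i • orbitB Tu i, j + k) := by
  induction k generalizing x j with
  | zero =>
    rw [ladder, foldl_tmul_genPow Tu (.inr rfl), tmul_smul_bGen]
    simp
  | succ k ih =>
    rw [ladder, List.foldl_append, foldl_tmul_genPow Tu (.inr rfl), tmul_smul_bGen,
      List.foldl_cons, ← one_smul ℤ tGen, tmul_smul_tGen, ih, Int.Icc_add_succ_eq_insert,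
      sum_insert (by simp)]
    push_cast
    exact Prod.ext (add_assoc _ _ _) (by ring)

theorem exists_word_of_representation {d : ℤ} (hTu : (Tu : Mat) = !![0, -1; 1, d])
    {n p q : ℤ} (hn : 0 ≤ n) (hp : 0 ≤ p) (hnq : n ≤ q) (c : ℤ →₀ ℤ)
    (hc : ∀ j ∈ c.support, -p - 1 ≤ j ∧ j ≤ q) :
    ∃ l : List Elt, (∀ s ∈ l, s ∈ gens) ∧
      l.foldl (tmul Tu) ((0 : Fin 2 → ℤ), 0) = (Finsupp.linearCombination ℤ (orbitB Tu) c, n) ∧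
      (l.length : ℤ) = 2 * p + 2 * q - n + c.sum fun _ a => |a| := by
  obtain ⟨k, hk⟩ : ∃ k : ℕ, (k : ℤ) = p + q := ⟨(p + q).toNat, Int.toNat_of_nonneg (by omega)⟩
  have hIcc : Icc (-p - 1) q = insert (-p - 1) (Icc (-p) (-p + k)) := by
    ext j
    simp only [mem_Icc, mem_insert]
    omega
  have hbottom : -p - 1 ∉ Icc (-p) (-p + k) := by simp
  have hsum {M : Type} [AddCommMonoid M] (f : ℤ → ℤ → M) (hf : ∀ j, f j 0 = 0) :
      c.sum f = f (-p - 1) (c (-p - 1)) + ∑ j ∈ Icc (-p) (-p + k), f j (c j) := by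
    rw [c.sum_of_support_subset (fun j hj => mem_Icc.2 (hc j hj)) f fun j _ => hf j, hIcc,
      sum_insert hbottom]
  refine ⟨genPow tGen (-p) ++ genPow aGen (c (-p - 1)) ++ ladder c (-p) k ++ genPow tGen (n - q),
    ?_, ?_, ?_⟩
  · simp only [List.mem_append]
    rintro s (((hs | hs) | hs) | hs)
    exacts [mem_gens_of_mem_genPow (.inr (.inr rfl)) hs, mem_gens_of_mem_genPow (.inl rfl) hs,
      mem_gens_of_mem_ladder c _ _ hs, mem_gens_of_mem_genPow (.inr (.inr rfl)) hs]
  · have hdown : (genPow tGen (-p)).foldl (tmul Tu) (0, 0) = (0, -p) := by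
      rw [foldl_tmul_genPow Tu (.inl rfl), tmul_smul_tGen, zero_add]
    rw [List.foldl_append, List.foldl_append, List.foldl_append, hdown,
      foldl_tmul_genPow Tu (s := aGen) (.inr rfl), tmul_smul_aGen Tu hTu, zero_add,
      foldl_tmul_ladder, foldl_tmul_genPow Tu (.inl rfl), tmul_smul_tGen,
      Finsupp.linearCombination_apply, hsum (fun j a => a • orbitB Tu j) fun _ => zero_smul ℤ _]
    exact Prod.ext rfl (by omega)
  · simp only [List.length_append, length_genPow]
    push_cast
    rw [length_ladder, hsum (fun _ a => |a|) fun _ => abs_zero, abs_neg, abs_of_nonneg hp,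
      abs_of_nonpos (by omega : n - q ≤ 0)]
    omega

/-- For `-P ≤ 0, m ≤ Q`, the quantity `2P + 2Q - |m|` is the least length of a walk on `ℤ` from
`0` to `m` visiting `-P` and `Q`. -/
def HasRepCostLE (g : Elt) (L : ℤ) : Prop :=
  ∃ (P Q : ℤ) (c : ℤ →₀ ℤ), 0 ≤ P ∧ 0 ≤ Q ∧ -P ≤ g.2 ∧ g.2 ≤ Q ∧
    (∀ j ∈ c.support, -P - 1 ≤ j ∧ j ≤ Q) ∧ g.1 = Finsupp.linearCombination ℤ (orbitB Tu) c ∧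
    2 * P + 2 * Q - |g.2| + (c.sum fun _ a => |a|) ≤ L

variable {Tu}

theorem HasRepCostLE.add_smul_orbitB {x : Fin 2 → ℤ} {m L : ℤ} (h : HasRepCostLE Tu (x, m) L)
    {i ε : ℤ} (hi : m - 1 ≤ i ∧ i ≤ m) (hε : |ε| = 1) :
    HasRepCostLE Tu (x + ε • orbitB Tu i, m) (L + 1) := by
  obtain ⟨P, Q, c, hP, hQ, hPm, hmQ, hc, hx, hL⟩ := h
  simp only at hPm hmQ hx hL
  refine ⟨P, Q, c + Finsupp.single i ε, hP, hQ, hPm, hmQ, fun j hj => ?_, ?_, ?_⟩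
  · rcases mem_union.1 (Finsupp.support_add hj) with hj | hj
    · exact hc j hj
    · rw [mem_singleton.1 (Finsupp.support_single_subset hj)]
      omega
  · rw [hx, map_add, Finsupp.linearCombination_single]
  · have := Finsupp.sum_abs_add_le c (Finsupp.single i ε)
    rw [Finsupp.sum_single_index abs_zero, hε] at this
    simp only
    linarith

theorem HasRepCostLE.shift {x : Fin 2 → ℤ} {m L : ℤ} (h : HasRepCostLE Tu (x, m) L)
    {ε : ℤ} (hε : |ε| = 1) : HasRepCostLE Tu (x, m + ε) (L + 1) := by
  obtain ⟨P, Q, c, hP, hQ, hPm, hmQ, hc, hx, hL⟩ := h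
  simp only at hPm hmQ hL
  obtain ⟨P', hPP', hmP', hP'⟩ : ∃ P', P ≤ P' ∧ -(m + ε) ≤ P' ∧ (P' = P ∨ P' = -(m + ε)) :=
    ⟨_, le_max_left _ _, le_max_right _ _, max_choice _ _⟩
  obtain ⟨Q', hQQ', hmQ', hQ'⟩ : ∃ Q', Q ≤ Q' ∧ m + ε ≤ Q' ∧ (Q' = Q ∨ Q' = m + ε) :=
    ⟨_, le_max_left _ _, le_max_right _ _, max_choice _ _⟩
  refine ⟨P', Q', c, by omega, by omega, by simp only; omega, hmQ', fun j hj => ?_, hx, ?_⟩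
  · have := hc j hj
    omega
  · simp only
    rcases abs_cases m with hm | hm <;>
      rcases abs_cases (m + ε) with hm' | hm' <;>
      rcases (abs_eq zero_le_one).1 hε with rfl | rfl <;> omega

variable (Tu)

theorem hasRepCostLE_foldl {d : ℤ} (hTu : (Tu : Mat) = !![0, -1; 1, d]) (l : List Elt)
    (hl : ∀ s ∈ l, s ∈ gens) :
    HasRepCostLE Tu (l.foldl (tmul Tu) ((0 : Fin 2 → ℤ), 0)) l.length := by
  induction l using List.reverseRecOn with
  | nil => exact ⟨0, 0, 0, le_rfl, le_rfl, le_rfl, le_rfl, by simp, by simp, by simp⟩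
  | append_singleton l s ih =>
    have ih' := ih fun s hs => hl s (List.mem_append_left _ hs)
    obtain ⟨ε, hε, rfl | rfl | rfl⟩ := mem_gens_iff.1 (hl s (by simp))
    all_goals
      rw [List.foldl_concat, List.length_append, List.length_singleton, Nat.cast_succ]
      generalize l.foldl (tmul Tu) (0, 0) = g at ih' ⊢
      obtain ⟨x, m⟩ := g
    · rw [tmul_smul_aGen Tu hTu]
      exact ih'.add_smul_orbitB (by omega) hε
    · rw [tmul_smul_bGen]
      exact ih'.add_smul_orbitB (by omega) hε
    · rw [tmul_smul_tGen]
      exact ih'.shift hε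

end SemidirectZ2

theorem word_length_eq_min_over_representations (d : ℤ)
    (Tu : (Matrix (Fin 2) (Fin 2) ℤ)ˣ)
    (hTu : (Tu : Matrix (Fin 2) (Fin 2) ℤ) = !![0, -1; 1, d])
    (x : Fin 2 → ℤ) (n : ℤ) (hn : 0 ≤ n) :
    (wlen Tu (x, n) : ℤ) =
      sInf {m : ℤ | ∃ (p q : ℤ) (c : ℤ →₀ ℤ), 0 ≤ p ∧ n ≤ q ∧
        (∀ j ∈ c.support, -p - 1 ≤ j ∧ j ≤ q) ∧
        x = (c.sum fun j cj =>
          cj • ((Tu ^ j : (Matrix (Fin 2) (Fin 2) ℤ)ˣ) :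
            Matrix (Fin 2) (Fin 2) ℤ).mulVec ![0, 1]) ∧
        m = 2 * p + 2 * q - n + ∑ j ∈ c.support, |c j|} := by
  obtain ⟨l₀, hl₀, hl₀x⟩ := SemidirectZ2.exists_word_foldl_eq Tu (x, n)
  refine natCast_sInf_eq_sInf_of_coinitial ⟨_, l₀, hl₀, hl₀x, rfl⟩ ?_ ?_
  · rintro _ ⟨p, q, c, hp, hnq, hc, rfl, rfl⟩
    obtain ⟨l, hl, hlx, hlen⟩ :=
      SemidirectZ2.exists_word_of_representation Tu hTu hn hp hnq c hc
    exact ⟨l.length, ⟨l, hl, by rw [hlx, Finsupp.linearCombination_apply]; rfl, rfl⟩, hlen.le⟩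
  · rintro _ ⟨l, hl, hlx, rfl⟩
    obtain ⟨P, Q, c, hP, -, -, hnQ, hc, hxc, hL⟩ :=
      hlx ▸ SemidirectZ2.hasRepCostLE_foldl Tu hTu l hl
    rw [abs_of_nonneg hn] at hL
    exact ⟨_, ⟨P, Q, c, hP, hnQ, hc, hxc.trans (Finsupp.linearCombination_apply ℤ c), rfl⟩, hL⟩
end

section
/- If the coefficient c_i of a Laurent polynomial satisfies |c_i| = k+2 at an interior position with neighbors c_{i+1}, c_{i-1}, then after the rule-2 rewriting the change in Σ|c_j| is sign⁺(c_{i+1}·sign(c_i)) - 3 + sign⁺(c_{i-1}·sign(c_i)) < 0; in particular the sum of absolute values of coefficients strictly decreases. -/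
/-! The centre coefficient `s (k + 2)` becomes `s (1 - k)`, so its absolute value drops by
exactly `3`, while each neighbour moves by one step in the direction `s` and so changes its
absolute value by `±1`. -/

/-- sign⁺(x) = 1 if x ≥ 0, -1 if x < 0. -/
def signP (x : ℤ) : ℤ := if 0 ≤ x then 1 else -1

lemma signP_le_one (x : ℤ) : signP x ≤ 1 := by
  unfold signP
  split_ifs <;> norm_num

lemma abs_add_one_sub_abs (x : ℤ) : |x + 1| - |x| = signP x := by
  unfold signP
  split_ifs with hx
  · rw [abs_of_nonneg hx, abs_of_nonneg (by omega)]
    ring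
  · rw [abs_of_neg (not_le.mp hx), abs_of_nonpos (by omega)]
    ring

lemma abs_sign_mul {s : ℤ} (hs : s = 1 ∨ s = -1) (x : ℤ) : |s * x| = |x| := by
  rcases hs with rfl | rfl <;> simp

lemma abs_add_sign_sub_abs {s : ℤ} (hs : s = 1 ∨ s = -1) (a : ℤ) :
    |a + s| - |a| = signP (s * a) := by
  have hss : s * s = 1 := by rcases hs with rfl | rfl <;> norm_num
  have ha : a + s = s * (s * a + 1) := by linear_combination (-a) * hss
  have ha' : a = s * (s * a) := by linear_combination (-a) * hss
  rw [ha, abs_sign_mul hs, ← abs_add_one_sub_abs, ← abs_sign_mul hs (s * a), ← ha']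

theorem rule2_rewriting_length_change (k : ℤ) (hk : 2 ≤ k) (a b s c : ℤ)
    (hs : s = 1 ∨ s = -1) (hc : c = s * (k + 2)) :
    (|a + s| + |c - s * (2 * k + 1)| + |b + s|) - (|a| + |c| + |b|)
        = signP (s * a) - 3 + signP (s * b) ∧
    |a + s| + |k + 2 - (2 * k + 1)| + |b + s| ≤ |a| + (k + 2) + |b| - 1 := by
  have hmid : |k + 2 - (2 * k + 1)| = k - 1 := by
    rw [abs_of_nonpos (by omega)]
    ring
  have hc_new : |c - s * (2 * k + 1)| = k - 1 := by
    rw [hc, ← mul_sub, abs_sign_mul hs, hmid]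
  have hc_old : |c| = k + 2 := by
    rw [hc, abs_sign_mul hs, abs_of_nonneg (by omega)]
  have ha := abs_add_sign_sub_abs hs a
  have hb := abs_add_sign_sub_abs hs b
  have ha_le := signP_le_one (s * a)
  have hb_le := signP_le_one (s * b)
  constructor <;> linarith
end

section
/- If P(X) = Σ_{i=0}^m c_i Xⁱ ∈ ℤ[X] is an n-reduced polynomial, then for every j with 0 ≤ j ≤ m, the truncation P_j(X) = Σ_{i=j}^m c_i Xⁱ is also n-reduced. -/
/-- Potential of the subword (c_j, …, c_l) (indices l ≤ j):
Pot = Σ_{l ≤ i ≤ j} ((2k-1) - 2|c_i|). -/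
noncomputable def Pot (k : ℤ) (c : ℤ → ℤ) (l j : ℤ) : ℤ :=
  ∑ i ∈ Finset.Icc l j, ((2 * k - 1) - 2 * |c i|)

/-- The polynomial with coefficients c (supported on [0,m], degree m) is n-reduced:
rules 1–6 of the paper. -/
def NReduced (k n m : ℤ) (c : ℤ → ℤ) : Prop :=
  -- Rule 1 (local top rule)
  (n ≤ m →
    |c m| ≤ k + 2 ∧ ((c m * c (m - 1)).sign < 0 → |c m| ≤ k + 1)) ∧
  -- Rule 2 (local non-top rule)
  (∀ i : ℤ, 0 ≤ i → ((i = m ∧ m < n) ∨ i < m) →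
    |c i| ≤ k + 1 ∧
    (((c (i + 1) * c i).sign < 0 ∨ (c i * c (i - 1)).sign < 0) → |c i| ≤ k) ∧
    (((c (i + 1) * c i).sign < 0 ∧ (c i * c (i - 1)).sign < 0) → |c i| ≤ k - 1)) ∧
  -- Rule 3 (local top rule)
  (n < m → ∀ ε : ℤ, (ε = 1 ∨ ε = -1) →
    ¬(c m = ε ∧ ε * c (m - 1) = -k) ∧
    ((c (m - 1) * c (m - 2)).sign < 0 → ¬(c m = ε ∧ ε * c (m - 1) = -k + 1))) ∧
  -- Rule 4 (global top rule)
  (n < m → ∀ i : ℤ, 1 ≤ i → ∀ ε : ℤ, (ε = 1 ∨ ε = -1) →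
    c m = ε →
    (ε * c (m - 1) = -k + 1 ∨ ε * c (m - 1) = -k + 2) →
    (∀ j : ℤ, 1 < j → j < i → (ε * c (m - j) = -k + 1 ∨ ε * c (m - j) = -k)) →
    (ε * c (m - i) = -k ∨ ε * c (m - i) = -k - 1) →
    (if 0 < c m * c (m - i - 1) then 2 ≤ Pot k c (m - i) (m - 1)
     else 0 < Pot k c (m - i) (m - 1))) ∧
  -- Rule 5 (global top rule)
  (n ≤ m → ∀ i : ℤ, 1 ≤ i → ∀ ε : ℤ, (ε = 1 ∨ ε = -1) →
    (ε * c m = k + 1 ∨ ε * c m = k + 2) →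
    (∀ j : ℤ, 0 < j → j < i → (ε * c (m - j) = k - 1 ∨ ε * c (m - j) = k)) →
    (ε * c (m - i) = k ∨ ε * c (m - i) = k + 1) →
    (if 0 ≤ c m * c (m - i - 1) then -6 < Pot k c (m - i) m
     else -4 ≤ Pot k c (m - i) m)) ∧
  -- Rule 6 (global non-top rule)
  (∀ l j : ℤ, 0 ≤ l → l < j → ((0 < j ∧ j < m) ∨ (0 < j ∧ j = m ∧ m < n)) →
    ∀ ε : ℤ, (ε = 1 ∨ ε = -1) →
    (ε * c j = k ∨ ε * c j = k + 1) →
    (ε * c l = k ∨ ε * c l = k + 1) →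
    (∀ s : ℤ, l < s → s < j → (ε * c s = k - 1 ∨ ε * c s = k)) →
    (if 0 ≤ c j * c (l - 1) then -3 - signP (c j * c (j + 1)) < Pot k c l j
     else -1 - signP (c j * c (j + 1)) ≤ Pot k c l j))

/-! Truncation only replaces coefficients by `0`. In the local rules this can only lower `|c_i|`
and destroy, never create, a strict sign change between neighbours. In each global rule the lowest
coefficient of the subword is `±k` or `±(k ± 1)`, nonzero since `k ≥ 2`, so the whole subword
and its potential survive; at most the coefficient just below it becomes `0`, and a zero product
selects the weaker of the two potential bounds. -/

/-- The truncation `P_j` of the polynomial with coefficients `c`. -/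
def truncate (j : ℤ) (c : ℤ → ℤ) : ℤ → ℤ := fun i => if j ≤ i then c i else 0

section IteTransfer

variable {α : Type*} [Preorder α] [Zero α]

theorem ite_pos_of_eq_or_eq_zero [DecidableLT α] {p q : α} {A B : Prop} (hAB : A → B)
    (hq : q = p ∨ q = 0) (h : if 0 < p then A else B) : if 0 < q then A else B := by
  rcases hq with rfl | rfl
  · exact h
  · rw [if_neg (lt_irrefl 0)]
    split_ifs at h
    exacts [hAB h, h]

theorem ite_nonneg_of_eq_or_eq_zero [DecidableLE α] {p q : α} {A B : Prop} (hBA : B → A)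
    (hq : q = p ∨ q = 0) (h : if 0 ≤ p then A else B) : if 0 ≤ q then A else B := by
  rcases hq with rfl | rfl
  · exact h
  · rw [if_pos le_rfl]
    split_ifs at h
    exacts [h, hBA h]

end IteTransfer

section Truncation

variable {k n m j : ℤ} {c : ℤ → ℤ}

theorem truncate_of_le {i : ℤ} (h : j ≤ i) : truncate j c i = c i := if_pos h

theorem le_of_truncate_ne_zero {i : ℤ} (h : truncate j c i ≠ 0) : j ≤ i := by
  by_contra hi
  exact h (if_neg hi)

theorem le_of_mul_truncate_eq {ε v i : ℤ} (hv : v ≠ 0) (h : ε * truncate j c i = v) :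
    j ≤ i :=
  le_of_truncate_ne_zero (right_ne_zero_of_mul (h ▸ hv))

theorem abs_truncate_le (i : ℤ) : |truncate j c i| ≤ |c i| := by
  unfold truncate
  split_ifs <;> simp

theorem mul_truncate_eq_or_eq_zero (a i : ℤ) :
    a * truncate j c i = a * c i ∨ a * truncate j c i = 0 := by
  unfold truncate
  split_ifs <;> simp

theorem sign_mul_truncate_neg {a b : ℤ} (h : (truncate j c a * truncate j c b).sign < 0) :
    (c a * c b).sign < 0 := by
  unfold truncate at h
  split_ifs at h <;> simp_all

theorem Pot_truncate {l r : ℤ} (h : j ≤ l) : Pot k (truncate j c) l r = Pot k c l r :=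
  Finset.sum_congr rfl fun i hi => by rw [truncate_of_le (h.trans (Finset.mem_Icc.mp hi).1)]

namespace NReduced

theorem truncate_rule1 (hred : NReduced k n m c) :
    n ≤ m → |truncate j c m| ≤ k + 2 ∧
      ((truncate j c m * truncate j c (m - 1)).sign < 0 → |truncate j c m| ≤ k + 1) :=
  fun hn => ⟨(abs_truncate_le m).trans (hred.1 hn).1,
    fun hs => (abs_truncate_le m).trans ((hred.1 hn).2 (sign_mul_truncate_neg hs))⟩

theorem truncate_rule2 (hred : NReduced k n m c) :
    ∀ i : ℤ, 0 ≤ i → ((i = m ∧ m < n) ∨ i < m) →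
      |truncate j c i| ≤ k + 1 ∧
      (((truncate j c (i + 1) * truncate j c i).sign < 0 ∨
          (truncate j c i * truncate j c (i - 1)).sign < 0) → |truncate j c i| ≤ k) ∧
      (((truncate j c (i + 1) * truncate j c i).sign < 0 ∧
          (truncate j c i * truncate j c (i - 1)).sign < 0) → |truncate j c i| ≤ k - 1) := by
  intro i hi hic
  obtain ⟨bound, bound_of_or, bound_of_and⟩ := hred.2.1 i hi hic
  have hs := @sign_mul_truncate_neg j c
  exact ⟨(abs_truncate_le i).trans bound,
    fun h => (abs_truncate_le i).trans (bound_of_or (h.imp hs hs)),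
    fun h => (abs_truncate_le i).trans (bound_of_and (h.imp hs hs))⟩

theorem truncate_rule3 (hk : 2 ≤ k) (hred : NReduced k n m c) :
    n < m → ∀ ε : ℤ, (ε = 1 ∨ ε = -1) →
      ¬(truncate j c m = ε ∧ ε * truncate j c (m - 1) = -k) ∧
      ((truncate j c (m - 1) * truncate j c (m - 2)).sign < 0 →
        ¬(truncate j c m = ε ∧ ε * truncate j c (m - 1) = -k + 1)) := by
  intro hn ε hε
  have top (h : truncate j c m = ε) : c m = ε := by
    have hne : truncate j c m ≠ 0 := by omega
    rwa [truncate_of_le (le_of_truncate_ne_zero hne)] at h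
  have next {v : ℤ} (hv : v ≠ 0) (h : ε * truncate j c (m - 1) = v) : ε * c (m - 1) = v := by
    rwa [truncate_of_le (le_of_mul_truncate_eq hv h)] at h
  obtain ⟨no_drop, no_drop_of_sign⟩ := hred.2.2.1 hn ε hε
  exact ⟨fun ⟨hm, h⟩ => no_drop ⟨top hm, next (by omega) h⟩,
    fun hs ⟨hm, h⟩ =>
      no_drop_of_sign (sign_mul_truncate_neg hs) ⟨top hm, next (by omega) h⟩⟩

theorem truncate_rule4 (hk : 2 ≤ k) (hred : NReduced k n m c) :
    n < m → ∀ i : ℤ, 1 ≤ i → ∀ ε : ℤ, (ε = 1 ∨ ε = -1) →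
      truncate j c m = ε →
      (ε * truncate j c (m - 1) = -k + 1 ∨ ε * truncate j c (m - 1) = -k + 2) →
      (∀ s : ℤ, 1 < s → s < i → (ε * truncate j c (m - s) = -k + 1 ∨
        ε * truncate j c (m - s) = -k)) →
      (ε * truncate j c (m - i) = -k ∨ ε * truncate j c (m - i) = -k - 1) →
      (if 0 < truncate j c m * truncate j c (m - i - 1) then
        2 ≤ Pot k (truncate j c) (m - i) (m - 1)
       else 0 < Pot k (truncate j c) (m - i) (m - 1)) := by
  intro hn i hi ε hε htop hnext hmid hlow
  have hjl : j ≤ m - i :=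
    hlow.elim (le_of_mul_truncate_eq (by omega)) (le_of_mul_truncate_eq (by omega))
  have agree (x : ℤ) (hx : m - i ≤ x) : truncate j c x = c x := truncate_of_le (hjl.trans hx)
  rw [agree m (by omega)] at htop ⊢
  rw [agree (m - 1) (by omega)] at hnext
  rw [agree (m - i) le_rfl] at hlow
  rw [Pot_truncate hjl]
  refine ite_pos_of_eq_or_eq_zero (fun h => by omega) (mul_truncate_eq_or_eq_zero _ _)
    (hred.2.2.2.1 hn i hi ε hε htop hnext (fun s hs hsi => ?_) hlow)
  rw [← agree (m - s) (by omega)]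
  exact hmid s hs hsi

theorem truncate_rule5 (hk : 2 ≤ k) (hred : NReduced k n m c) :
    n ≤ m → ∀ i : ℤ, 1 ≤ i → ∀ ε : ℤ, (ε = 1 ∨ ε = -1) →
      (ε * truncate j c m = k + 1 ∨ ε * truncate j c m = k + 2) →
      (∀ s : ℤ, 0 < s → s < i → (ε * truncate j c (m - s) = k - 1 ∨
        ε * truncate j c (m - s) = k)) →
      (ε * truncate j c (m - i) = k ∨ ε * truncate j c (m - i) = k + 1) →
      (if 0 ≤ truncate j c m * truncate j c (m - i - 1) then
        -6 < Pot k (truncate j c) (m - i) m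
       else -4 ≤ Pot k (truncate j c) (m - i) m) := by
  intro hn i hi ε hε htop hmid hlow
  have hjl : j ≤ m - i :=
    hlow.elim (le_of_mul_truncate_eq (by omega)) (le_of_mul_truncate_eq (by omega))
  have agree (x : ℤ) (hx : m - i ≤ x) : truncate j c x = c x := truncate_of_le (hjl.trans hx)
  rw [agree m (by omega)] at htop ⊢
  rw [agree (m - i) le_rfl] at hlow
  rw [Pot_truncate hjl]
  refine ite_nonneg_of_eq_or_eq_zero (fun h => by omega) (mul_truncate_eq_or_eq_zero _ _)
    (hred.2.2.2.2.1 hn i hi ε hε htop (fun s hs hsi => ?_) hlow)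
  rw [← agree (m - s) (by omega)]
  exact hmid s hs hsi

theorem truncate_rule6 (hk : 2 ≤ k) (hred : NReduced k n m c) :
    ∀ l r : ℤ, 0 ≤ l → l < r → ((0 < r ∧ r < m) ∨ (0 < r ∧ r = m ∧ m < n)) →
      ∀ ε : ℤ, (ε = 1 ∨ ε = -1) →
      (ε * truncate j c r = k ∨ ε * truncate j c r = k + 1) →
      (ε * truncate j c l = k ∨ ε * truncate j c l = k + 1) →
      (∀ s : ℤ, l < s → s < r →
        (ε * truncate j c s = k - 1 ∨ ε * truncate j c s = k)) →
      (if 0 ≤ truncate j c r * truncate j c (l - 1) then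
        -3 - signP (truncate j c r * truncate j c (r + 1)) < Pot k (truncate j c) l r
       else -1 - signP (truncate j c r * truncate j c (r + 1)) ≤ Pot k (truncate j c) l r) := by
  intro l r hl hlr hr ε hε htop hlow hmid
  have hjl : j ≤ l :=
    hlow.elim (le_of_mul_truncate_eq (by omega)) (le_of_mul_truncate_eq (by omega))
  have agree (x : ℤ) (hx : l ≤ x) : truncate j c x = c x := truncate_of_le (hjl.trans hx)
  rw [agree r (by omega)] at htop ⊢
  rw [agree l le_rfl] at hlow
  rw [agree (r + 1) (by omega), Pot_truncate hjl]
  refine ite_nonneg_of_eq_or_eq_zero (fun h => by omega) (mul_truncate_eq_or_eq_zero _ _)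
    (hred.2.2.2.2.2 l r hl hlr hr ε hε htop hlow (fun s hs hsr => ?_))
  rw [← agree s (by omega)]
  exact hmid s hs hsr

end NReduced

end Truncation

theorem truncation_of_nReduced_is_nReduced_general (k n m : ℤ) (hk : 2 ≤ k)
    (c : ℤ → ℤ)
    (hred : NReduced k n m c) (j : ℤ) :
    NReduced k n m (fun i => if j ≤ i then c i else 0) := by
  change NReduced k n m (truncate j c)
  exact ⟨hred.truncate_rule1, hred.truncate_rule2, hred.truncate_rule3 hk,
    hred.truncate_rule4 hk, hred.truncate_rule5 hk, hred.truncate_rule6 hk⟩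

theorem truncation_of_nReduced_is_nReduced (k n m : ℤ) (hk : 2 ≤ k) (hm : 0 ≤ m)
    (c : ℤ → ℤ) (hsupp : ∀ i : ℤ, i < 0 ∨ m < i → c i = 0)
    (hred : NReduced k n m c) (j : ℤ) (hj0 : 0 ≤ j) (hjm : j ≤ m) :
    NReduced k n m (fun i => if j ≤ i then c i else 0) :=
  truncation_of_nReduced_is_nReduced_general k n m hk c hred j
end

section
/- Let P ∈ ℤ[X] and n ∈ ℤ. Then P is n-reduced if and only if X·P(X) is (n+1)-reduced. -/
/-- The coefficient function of an integer polynomial, indexed by ℤ. -/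
noncomputable def cfun (P : Polynomial ℤ) : ℤ → ℤ :=
  fun i => if 0 ≤ i then P.coeff i.toNat else 0

/-! Multiplying by `X` replaces the coefficient word `c` by `c (· - 1)` and raises the degree by
one, so each rule for `(n + 1, m + 1)` is the same rule for `(n, m)` read at indices shifted by
one. The only index not covered by the shift is the new constant term, and it is harmless because
it vanishes. For `P = 0` the degree does not move, but the zero word satisfies every rule. -/

lemma Pot_comp_sub_one (k : ℤ) (c : ℤ → ℤ) (l j : ℤ) :
    Pot k (fun i => c (i - 1)) l j = Pot k c (l - 1) (j - 1) := by
  simp only [Pot, sub_eq_add_neg, ← Finset.map_add_right_Icc l j (-1), Finset.sum_map]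
  rfl

theorem nReduced_zero {k : ℤ} (hk : 0 < k) (n m : ℤ) : NReduced k n m 0 := by
  refine ⟨?_, ?_, ?_, ?_, ?_, ?_⟩ <;>
    simp only [Pi.zero_apply, abs_zero, mul_zero, Int.sign_zero, lt_irrefl, or_self, false_and,
      false_imp_iff, and_true] <;> intros <;> omega

private lemma add_one_sub_two (x : ℤ) : x + 1 - 2 = x - 1 := by ring
private lemma add_one_sub_sub_one (x y : ℤ) : x + 1 - y - 1 = x - y := by ring
private lemma sub_one_sub_one (x : ℤ) : x - 1 - 1 = x - 2 := by ring

theorem NReduced.shift {k n m : ℤ} {c : ℤ → ℤ} (hk : 0 < k) (hc : ∀ i < 0, c i = 0)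
    (h : NReduced k n m c) : NReduced k (n + 1) (m + 1) (fun i => c (i - 1)) := by
  obtain ⟨h1, h2, h3, h4, h5, h6⟩ := h
  simp only [NReduced, Pot_comp_sub_one, add_sub_cancel_right, add_one_sub_two,
    add_one_sub_sub_one, sub_one_sub_one]
  refine ⟨fun hnm => h1 (by omega), ?_, fun hnm => h3 (by omega), fun hnm => h4 (by omega),
    fun hnm => h5 (by omega), ?_⟩
  · intro i hi hcond
    rcases hi.eq_or_lt with rfl | hi
    · simp only [hc (0 - 1) (by norm_num), abs_zero, mul_zero, Int.sign_zero, lt_irrefl]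
      omega
    · simpa only [sub_add_cancel, sub_one_sub_one] using h2 (i - 1) (by omega) (by omega)
  · intro l j hl hlj hcond ε hε hcj hcl hs
    rcases hl.eq_or_lt with rfl | hl
    · rw [hc (0 - 1) (by norm_num), mul_zero] at hcl
      omega
    · have := h6 (l - 1) (j - 1) (by omega) (by omega) (by omega) ε hε hcj hcl
        fun s hs₁ hs₂ => by
          simpa only [add_sub_cancel_right] using hs (s + 1) (by omega) (by omega)
      simpa only [sub_add_cancel, sub_one_sub_one] using this

theorem NReduced.of_shift {k n m : ℤ} {c : ℤ → ℤ}
    (h : NReduced k (n + 1) (m + 1) (fun i => c (i - 1))) : NReduced k n m c := by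
  obtain ⟨h1, h2, h3, h4, h5, h6⟩ := h
  simp only [Pot_comp_sub_one, add_sub_cancel_right, add_one_sub_two, add_one_sub_sub_one,
    sub_one_sub_one] at h1 h2 h3 h4 h5 h6
  refine ⟨fun hnm => h1 (by omega), ?_, fun hnm => h3 (by omega), fun hnm => h4 (by omega),
    fun hnm => h5 (by omega), ?_⟩
  · intro i hi hcond
    simpa only [add_sub_cancel_right, add_one_sub_two] using h2 (i + 1) (by omega) (by omega)
  · intro l j hl hlj hcond ε hε hcj hcl hs
    have := h6 (l + 1) (j + 1) (by omega) (by omega) (by omega) ε hε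
      (by simpa only [add_sub_cancel_right] using hcj)
      (by simpa only [add_sub_cancel_right] using hcl)
      (fun s hs₁ hs₂ => by simpa only [sub_add_cancel] using hs (s - 1) (by omega) (by omega))
    simpa only [add_sub_cancel_right, add_one_sub_two] using this

theorem nReduced_iff_nReduced_shift {k n m : ℤ} {c : ℤ → ℤ} (hk : 0 < k)
    (hc : ∀ i < 0, c i = 0) :
    NReduced k n m c ↔ NReduced k (n + 1) (m + 1) (fun i => c (i - 1)) :=
  ⟨NReduced.shift hk hc, NReduced.of_shift⟩

lemma cfun_zero : cfun 0 = 0 := by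
  funext i
  simp [cfun]

lemma cfun_of_neg (P : Polynomial ℤ) {i : ℤ} (hi : i < 0) : cfun P i = 0 :=
  if_neg hi.not_ge

lemma cfun_X_mul (P : Polynomial ℤ) : cfun (Polynomial.X * P) = fun i => cfun P (i - 1) := by
  funext i
  rcases lt_trichotomy i 0 with hi | rfl | hi
  · rw [cfun_of_neg _ hi, cfun_of_neg _ (by omega)]
  · simp [cfun]
  · have : i.toNat = (i - 1).toNat + 1 := by omega
    simp only [cfun, if_pos hi.le, if_pos (by omega : (0 : ℤ) ≤ i - 1), this,
      Polynomial.coeff_X_mul]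

theorem nReduced_iff_mul_X_succ_reduced (k : ℤ) (hk : 2 ≤ k) (n : ℤ) (P : Polynomial ℤ) :
    NReduced k n (P.natDegree : ℤ) (cfun P) ↔
      NReduced k (n + 1) ((Polynomial.X * P).natDegree : ℤ) (cfun (Polynomial.X * P)) := by
  have hk₀ : 0 < k := by omega
  by_cases hP : P = 0
  · subst hP
    rw [mul_zero, cfun_zero]
    exact iff_of_true (nReduced_zero hk₀ _ _) (nReduced_zero hk₀ _ _)
  · rw [cfun_X_mul, Polynomial.natDegree_X_mul hP, Nat.cast_succ]
    exact nReduced_iff_nReduced_shift hk₀ fun i => cfun_of_neg P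
end

section
/- (Spanning lemma) Let G = ⟨a,b⟩ be free abelian of rank 2. Suppose (g_i)_{i≥0} is a sequence in G with g_0 = 0, g_1 = b, g_{i+1} - g_i ∈ {b, b-a, -a} for all i, and whenever g_{i+1} - g_i ∈ {b-a, -a}, then g_{i+2} - g_{i+1} = g_{i+3} - g_{i+2} = b. Define h_i by swapping coordinates: if g_i = k·a + t·b then h_i = t·a + k·b. Then for every γ ∈ G there exist i, j ∈ ℕ and signs ε, δ ∈ {±1} with γ = ε·g_i + δ·h_j. -/
/-!
Write `g i = (x i, y i)`. The path `g` climbs weakly up and to the left, and since every turn to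
the left is followed by two steps up, it satisfies the slope bound `-2 x ≤ y + 1`. Let `φ t` be
the `x`-coordinate of the last point of the path at height `t`.

For `q ≥ 0` and `p ≥ φ q`, the function `j ↦ φ (q - x j) + y j` starts at `φ q ≤ p`, rises by at
most one per step and tends to infinity by the slope bound, so it takes the value `p`; this
writes `(p, q) = g i + h j` with `g i` the last point at height `q - x j`. For `p < φ q` the
function `k ↦ y k - φ (x k - p)` on the indices up to height `q` likewise writes
`(p, q) = g k - h j`, unless `q < -φ (-p)`, in which case `(-q, -p)` is covered by the first case.
Negation takes care of `q < 0`.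
-/

theorem exists_eq_of_succ_le_add_one {f : ℕ → ℤ} {n : ℕ} {c : ℤ}
    (hf : ∀ k < n, f (k + 1) ≤ f k + 1) (h0 : f 0 ≤ c) (hn : c ≤ f n) :
    ∃ k ≤ n, f k = c := by
  induction n with
  | zero => exact ⟨0, le_rfl, le_antisymm h0 hn⟩
  | succ n ih =>
    by_cases hc : c ≤ f n
    · obtain ⟨k, hk, rfl⟩ := ih (fun k hk => hf k (by omega)) hc
      exact ⟨k, by omega, rfl⟩
    · exact ⟨n + 1, le_rfl, by have := hf n (by omega); omega⟩

def IsStaircase (g : ℕ → ℤ × ℤ) : Prop :=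
  ∀ i, g (i + 1) - g i = (0, 1) ∨ g (i + 1) - g i = (-1, 1) ∨ g (i + 1) - g i = (-1, 0)

def ClimbsAfterTurn (g : ℕ → ℤ × ℤ) : Prop :=
  ∀ i, (g (i + 1) - g i = (-1, 1) ∨ g (i + 1) - g i = (-1, 0)) →
    g (i + 2) - g (i + 1) = (0, 1) ∧ g (i + 3) - g (i + 2) = (0, 1)

noncomputable def lastIndex (g : ℕ → ℤ × ℤ) (t : ℤ) : ℕ := sSup {k | (g k).2 ≤ t}

noncomputable def profile (g : ℕ → ℤ × ℤ) (t : ℤ) : ℤ := (g (lastIndex g t)).1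

namespace IsStaircase

variable {g : ℕ → ℤ × ℤ}

theorem step_cases (hg : IsStaircase g) (i : ℕ) :
    ((g (i + 1)).1 = (g i).1 ∧ (g (i + 1)).2 = (g i).2 + 1) ∨
    ((g (i + 1)).1 = (g i).1 - 1 ∧ (g (i + 1)).2 = (g i).2 + 1) ∨
    ((g (i + 1)).1 = (g i).1 - 1 ∧ (g (i + 1)).2 = (g i).2) := by
  rcases hg i with h | h | h <;> simp only [Prod.ext_iff, Prod.fst_sub, Prod.snd_sub] at h <;> omega

theorem antitone_fst (hg : IsStaircase g) : Antitone fun i => (g i).1 :=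
  antitone_nat_of_succ_le fun i => by rcases hg.step_cases i with h | h | h <;> omega

theorem monotone_snd (hg : IsStaircase g) : Monotone fun i => (g i).2 :=
  monotone_nat_of_le_succ fun i => by rcases hg.step_cases i with h | h | h <;> omega

theorem snd_succ_le (hg : IsStaircase g) (i : ℕ) : (g (i + 1)).2 ≤ (g i).2 + 1 := by
  rcases hg.step_cases i with h | h | h <;> omega

theorem fst_nonpos (hg : IsStaircase g) (h0 : g 0 = 0) (i : ℕ) : (g i).1 ≤ 0 := by
  simpa [h0] using hg.antitone_fst i.zero_le

theorem snd_nonneg (hg : IsStaircase g) (h0 : g 0 = 0) (i : ℕ) : 0 ≤ (g i).2 := by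
  simpa [h0] using hg.monotone_snd i.zero_le

theorem le_snd_sub_fst (hg : IsStaircase g) (h0 : g 0 = 0) (i : ℕ) :
    (i : ℤ) ≤ (g i).2 - (g i).1 := by
  induction i with
  | zero => simp [h0]
  | succ i ih => push_cast; rcases hg.step_cases i with h | h | h <;> omega

theorem step_vertical_of_turn (hg : IsStaircase g) (hc : ClimbsAfterTurn g) {j : ℕ}
    (hj : (g (j + 1)).1 ≠ (g j).1) :
    (g (j + 2)).1 = (g (j + 1)).1 ∧ (g (j + 2)).2 = (g (j + 1)).2 + 1 ∧
    (g (j + 3)).1 = (g (j + 2)).1 ∧ (g (j + 3)).2 = (g (j + 2)).2 + 1 := by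
  have hturn := hc j <| (hg j).resolve_left fun h => hj <| by
    simp only [Prod.ext_iff, Prod.fst_sub] at h; omega
  simp only [Prod.ext_iff, Prod.fst_sub, Prod.snd_sub] at hturn
  omega

-- Among three consecutive steps at most one turns left.
theorem snd_add_two_mul_fst_le (hg : IsStaircase g) (hc : ClimbsAfterTurn g) (i : ℕ) :
    (g i).2 + 2 * (g i).1 ≤ (g (i + 3)).2 + 2 * (g (i + 3)).1 := by
  have := hg.step_vertical_of_turn hc (j := i)
  have := hg.step_vertical_of_turn hc (j := i + 1)
  have := hg.step_cases i
  have := hg.step_cases (i + 1)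
  have := hg.step_cases (i + 2)
  simp only [add_assoc, Nat.reduceAdd] at *
  omega

theorem neg_two_mul_fst_le (hg : IsStaircase g) (hc : ClimbsAfterTurn g) (h0 : g 0 = 0)
    (h1 : g 1 = (0, 1)) (i : ℕ) : -2 * (g i).1 ≤ (g i).2 + 1 := by
  induction i using Nat.strong_induction_on with
  | _ i ih =>
    match i with
    | 0 => simp [h0]
    | 1 => simp [h1]
    | 2 => have := hg.step_cases 1; norm_num [h1] at this; omega
    | n + 3 => have := ih n (by omega); have := hg.snd_add_two_mul_fst_le hc n; omega

theorem exists_lt_snd (hg : IsStaircase g) (h0 : g 0 = 0)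
    (hslope : ∀ i, -2 * (g i).1 ≤ (g i).2 + 1) (t : ℤ) : ∃ k, t < (g k).2 := by
  refine ⟨2 * t.toNat + 2, ?_⟩
  have := hg.le_snd_sub_fst h0 (2 * t.toNat + 2)
  have := hslope (2 * t.toNat + 2)
  push_cast at *
  omega

theorem bddAbove_setOf_snd_le (hg : IsStaircase g) (hunb : ∀ t, ∃ k, t < (g k).2) (t : ℤ) :
    BddAbove {k | (g k).2 ≤ t} := by
  obtain ⟨n, hn⟩ := hunb t
  exact ⟨n, fun k (hk : (g k).2 ≤ t) => le_of_not_gt fun hnk => by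
    have := hg.monotone_snd hnk.le; simp only at this; omega⟩

theorem le_lastIndex (hg : IsStaircase g) (hunb : ∀ t, ∃ k, t < (g k).2) {t : ℤ} {k : ℕ}
    (hk : (g k).2 ≤ t) : k ≤ lastIndex g t :=
  le_csSup (hg.bddAbove_setOf_snd_le hunb t) hk

theorem snd_lastIndex (hg : IsStaircase g) (hunb : ∀ t, ∃ k, t < (g k).2) {t : ℤ}
    (ht : (g 0).2 ≤ t) : (g (lastIndex g t)).2 = t := by
  have hle : (g (lastIndex g t)).2 ≤ t := Nat.sSup_mem ⟨0, ht⟩ (hg.bddAbove_setOf_snd_le hunb t)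
  have hlt : t < (g (lastIndex g t + 1)).2 :=
    lt_of_not_ge fun h => (hg.le_lastIndex hunb h).not_gt (Nat.lt_succ_self _)
  have := hg.snd_succ_le (lastIndex g t)
  omega

theorem profile_le (hg : IsStaircase g) (hunb : ∀ t, ∃ k, t < (g k).2) {t : ℤ} {k : ℕ}
    (hk : (g k).2 ≤ t) : profile g t ≤ (g k).1 :=
  hg.antitone_fst (hg.le_lastIndex hunb hk)

theorem profile_nonpos (hg : IsStaircase g) (h0 : g 0 = 0) (hunb : ∀ t, ∃ k, t < (g k).2)
    {t : ℤ} (ht : 0 ≤ t) : profile g t ≤ 0 := by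
  simpa [h0] using hg.profile_le hunb (k := 0) (by simpa [h0])

theorem profile_succ_le (hg : IsStaircase g) (hunb : ∀ t, ∃ k, t < (g k).2) {t : ℤ}
    (ht : (g 0).2 ≤ t) : profile g (t + 1) ≤ profile g t :=
  hg.profile_le hunb (by rw [hg.snd_lastIndex hunb ht]; omega)

theorem exists_add_swap_eq (hg : IsStaircase g) (h0 : g 0 = 0) (hunb : ∀ t, ∃ k, t < (g k).2)
    (hslope : ∀ i, -2 * (g i).1 ≤ (g i).2 + 1) {p q : ℤ} (hq : 0 ≤ q) (hp : profile g q ≤ p) :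
    ∃ i j, g i + (g j).swap = (p, q) := by
  have hq' (k : ℕ) : (g 0).2 ≤ q - (g k).1 := by simp [h0]; linarith [hg.fst_nonpos h0 k]
  set f : ℕ → ℤ := fun j => profile g (q - (g j).1) + (g j).2 with hf
  have hstep (k : ℕ) : f (k + 1) ≤ f k + 1 := by
    have := hg.profile_succ_le hunb (hq' k)
    rcases hg.step_cases k with h | h | h <;>
      simp only [hf, h.1, sub_sub_eq_add_sub, add_sub_right_comm q] <;> omega
  -- both the path and the profile have slope at most 1/2, so `f` grows like 3/4 of the height
  obtain ⟨n, hn⟩ := hunb (4 * p + 2 * q + 3)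
  have hlarge : p ≤ f n := by
    have := hslope (lastIndex g (q - (g n).1))
    have := hslope n
    have := hg.snd_nonneg h0 n
    simp only [hf, profile, hg.snd_lastIndex hunb (hq' n)] at *
    omega
  obtain ⟨j, -, hj⟩ := exists_eq_of_succ_le_add_one (fun k _ => hstep k)
    (by simpa [hf, h0] using hp) hlarge
  refine ⟨lastIndex g (q - (g j).1), j, ?_⟩
  have := hg.snd_lastIndex hunb (hq' j)
  simp only [hf, profile] at hj
  ext <;> simp <;> omega

theorem exists_sub_swap_eq (hg : IsStaircase g) (h0 : g 0 = 0) (hunb : ∀ t, ∃ k, t < (g k).2)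
    {p q : ℤ} (hq : 0 ≤ q) (hp : p ≤ profile g q) (hpq : -profile g (-p) ≤ q) :
    ∃ i j, g i - (g j).swap = (p, q) := by
  set n := lastIndex g q
  have hn : (g n).2 = q := hg.snd_lastIndex hunb (by simpa [h0])
  have hfst {k : ℕ} (hk : k ≤ n) : p ≤ (g k).1 :=
    hp.trans (hg.profile_le hunb (hn ▸ hg.monotone_snd hk))
  set f : ℕ → ℤ := fun k => (g k).2 - profile g ((g k).1 - p) with hf
  have hstep (k : ℕ) (hk : k < n) : f (k + 1) ≤ f k + 1 := by
    have hk' := hfst hk.le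
    have hk'' := hfst (k := k + 1) hk
    rcases hg.step_cases k with h | h | h
    · simp only [hf, h.1, h.2]; omega
    all_goals
      have := hg.profile_succ_le hunb (t := (g k).1 - 1 - p) (by simp [h0]; omega)
      simp only [hf, h.1, sub_add_cancel, sub_right_comm _ (1 : ℤ) p] at this ⊢
      omega
  have hfn : q ≤ f n := by
    have := hg.profile_nonpos h0 hunb (t := (g n).1 - p) (by linarith [hfst le_rfl])
    simp only [hf, hn]; omega
  obtain ⟨k, hkn, hk⟩ := exists_eq_of_succ_le_add_one hstep (by simpa [hf, h0]) hfn
  refine ⟨k, lastIndex g ((g k).1 - p), ?_⟩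
  have := hg.snd_lastIndex hunb (t := (g k).1 - p) (by simp [h0]; linarith [hfst hkn])
  simp only [hf, profile] at hk
  ext <;> simp <;> omega

end IsStaircase

theorem spanning_lemma (g : ℕ → ℤ × ℤ)
    (h0 : g 0 = 0) (h1 : g 1 = (0, 1))
    (hstep : ∀ i, g (i + 1) - g i = (0, 1) ∨ g (i + 1) - g i = (-1, 1) ∨
      g (i + 1) - g i = (-1, 0))
    (hfollow : ∀ i, (g (i + 1) - g i = (-1, 1) ∨ g (i + 1) - g i = (-1, 0)) →
      g (i + 2) - g (i + 1) = (0, 1) ∧ g (i + 3) - g (i + 2) = (0, 1)) :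
    ∀ γ : ℤ × ℤ, ∃ (i j : ℕ) (ε δ : ℤ), (ε = 1 ∨ ε = -1) ∧ (δ = 1 ∨ δ = -1) ∧
      γ = ε • g i + δ • Prod.swap (g j) := by
  have hg : IsStaircase g := hstep
  have hslope := hg.neg_two_mul_fst_le hfollow h0 h1
  have hunb := hg.exists_lt_snd h0 hslope
  intro γ
  wlog hq : 0 ≤ γ.2 generalizing γ
  · obtain ⟨i, j, ε, δ, hε, hδ, h⟩ := this (-γ) (by simp; omega)
    refine ⟨i, j, -ε, -δ, by omega, by omega, ?_⟩
    rw [neg_smul, neg_smul, ← neg_add, ← h, neg_neg]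
  obtain ⟨p, q⟩ := γ
  rcases le_or_gt (profile g q) p with hp | hp
  · obtain ⟨i, j, h⟩ := hg.exists_add_swap_eq h0 hunb hslope hq hp
    exact ⟨i, j, 1, 1, by simp, by simp, by simp [h]⟩
  rcases le_or_gt (-profile g (-p)) q with hpq | hpq
  · obtain ⟨i, j, h⟩ := hg.exists_sub_swap_eq h0 hunb hq hp.le hpq
    exact ⟨i, j, 1, -1, by simp, by simp, by simp [← h, sub_eq_add_neg]⟩
  have := hg.profile_nonpos h0 hunb (t := q) hq
  obtain ⟨i, j, h⟩ := hg.exists_add_swap_eq h0 hunb hslope (q := -p) (p := -q) (by omega) (by omega)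
  refine ⟨j, i, -1, -1, by simp, by simp, ?_⟩
  simp only [Prod.ext_iff, Prod.fst_add, Prod.snd_add, Prod.fst_swap, Prod.snd_swap] at h
  ext <;> simp <;> omega
end
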